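/- arXiv:math/9905076 — 3 statements merged into one kernel-verified Lean document; each statement's English description precedes it below -/
import Mathlib

section
/- Let e, d, m0 be integers with e ≥ 1, d ≥ 2e, and m0 ≥ 2e − 2. If e(d − m0 − 8) + m0 + 2 = 0 and (d−2e)(d−2e+3)/2 − (m0−2e+2)(m0−2e+3)/2 − 6e ≥ 0, then either (d = 2e+4, m0 = 2e−2, and e ≤ 2), or (d = 3e+3, m0 = 3e−2, and e ≤ 4), or (d = 4e+2 and m0 = 4e−2), or (d = 5e+1 and m0 = 5e−2). -/
/-!
Put `k = d - m0`. The equation `M·A = 0` reads `m0 = e (8 - k) - 2`, so `m0 ≥ 2e - 2` forces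
`k ≤ 6`. With `a = d - 2e` and `b = m0 - 2e + 2` both halvings in `v(M)` are exact, and
`2 v(M) = a (a + 3) - b (b + 1) - 12e = 2e (6 - k) (k - 1) + (k - 2) (k + 1) - 12e`.
This is negative for `k ≤ 2`, and for `k = 5, 6` it bounds `e` by `4, 2`.
-/

lemma Int.even_mul_add_three_self (n : ℤ) : Even (n * (n + 3)) := by
  rw [show n * (n + 3) = n * (n + 1) + 2 * n by ring]
  exact (Int.even_mul_succ_self n).add (even_two_mul n)

lemma cases_of_residual_dim_nonneg (e k : ℤ) (he : 1 ≤ e) (hk : k ≤ 6)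
    (h : 12 * e ≤ 2 * e * (6 - k) * (k - 1) + (k - 2) * (k + 1)) :
    k = 3 ∨ k = 4 ∨ (k = 5 ∧ e ≤ 4) ∨ (k = 6 ∧ e ≤ 2) := by
  have hk3 : 3 ≤ k := by
    by_contra! hk2
    rcases (show k = 2 ∨ k ≤ 1 by omega) with rfl | hk1
    · linarith
    · have hneg : (e - 1) * ((6 - k) * (k - 1)) ≤ 0 :=
        mul_nonpos_of_nonneg_of_nonpos (by linarith) (by nlinarith)
      nlinarith
  interval_cases k <;> omega

theorem split_twice_general (e d m0 : ℤ) (he : 1 ≤ e) (hm : 2 * e - 2 ≤ m0)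
    (hMA : e * (d - m0 - 8) + m0 + 2 = 0)
    (hvM : 0 ≤ (d - 2 * e) * (d - 2 * e + 3) / 2 - (m0 - 2 * e + 2) * (m0 - 2 * e + 3) / 2
        - 6 * e) :
    (d = 2 * e + 4 ∧ m0 = 2 * e - 2 ∧ e ≤ 2) ∨
    (d = 3 * e + 3 ∧ m0 = 3 * e - 2 ∧ e ≤ 4) ∨
    (d = 4 * e + 2 ∧ m0 = 4 * e - 2) ∨
    (d = 5 * e + 1 ∧ m0 = 5 * e - 2) := by
  have ha := Int.two_mul_ediv_two_of_even (Int.even_mul_add_three_self (d - 2 * e))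
  have hb := Int.two_mul_ediv_two_of_even (Int.even_mul_succ_self (m0 - 2 * e + 2))
  rw [show m0 - 2 * e + 2 + 1 = m0 - 2 * e + 3 by ring] at hb
  obtain ⟨k, rfl⟩ : ∃ k, d = m0 + k := ⟨d - m0, by ring⟩
  obtain rfl : m0 = e * (8 - k) - 2 := by linear_combination hMA
  have hk : k ≤ 6 := by nlinarith
  have hv : 12 * e ≤ 2 * e * (6 - k) * (k - 1) + (k - 2) * (k + 1) := by
    linear_combination 2 * hvM + ha - hb
  rcases cases_of_residual_dim_nonneg e k he hk hv with rfl | rfl | ⟨rfl, he4⟩ | ⟨rfl, he2⟩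
  · exact .inr <| .inr <| .inr ⟨by ring, by ring⟩
  · exact .inr <| .inr <| .inl ⟨by ring, by ring⟩
  · exact .inr <| .inl ⟨by ring, by ring, he4⟩
  · exact .inl ⟨by ring, by ring, he2⟩

/-- Case analysis: `A = L(e, e-1, 2e, 1)` splits off twice from `L(d, m0, 2e, 4)`.
If `M·A = 0` and `v(M) ≥ 0` then one of four families occurs. -/
theorem split_twice (e d m0 : ℤ) (he : 1 ≤ e) (hd : 2 * e ≤ d) (hm : 2 * e - 2 ≤ m0)
    (hMA : e * (d - m0 - 8) + m0 + 2 = 0)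
    (hvM : 0 ≤ (d - 2 * e) * (d - 2 * e + 3) / 2 - (m0 - 2 * e + 2) * (m0 - 2 * e + 3) / 2
        - 6 * e) :
    (d = 2 * e + 4 ∧ m0 = 2 * e - 2 ∧ e ≤ 2) ∨
    (d = 3 * e + 3 ∧ m0 = 3 * e - 2 ∧ e ≤ 4) ∨
    (d = 4 * e + 2 ∧ m0 = 4 * e - 2) ∨
    (d = 5 * e + 1 ∧ m0 = 5 * e - 2) :=
  split_twice_general e d m0 he hm hMA hvM
end

section
/- Let d, m0, n, k, b be integers with k < d. Define v = d(d+3)/2 − m0(m0+1)/2 − 10n, v_P = (d−k)(d−k+3)/2 − m0(m0+1)/2 − 10(n−b), v_F = d(d+3)/2 − (d−k)(d−k+1)/2 − 10b, v̂_P = (d−k−1)(d−k+2)/2 − m0(m0+1)/2 − 10(n−b), and v̂_F = d(d+3)/2 − (d−k+1)(d−k+2)/2 − 10b. Assume v ≥ −1, v_P ≥ −1, and v_F ≥ −1. Then (v_P − max(−1, v̂_P) − 1) + (v_F − max(−1, v̂_F) − 1) ≥ d − k − 1. -/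
/-!
Put `a = d - k`. Lowering the degree of `L(d - k, m0, n - b, 4)` by one, or raising the
multiplicity `d - k` of `L(d, d - k, b, 4)` by one, lowers the virtual dimension by exactly
`a + 1`; hence `r_P = min v_P a` and `r_F = min v_F a`. Moreover `v_P + v_F = v + a`, so either
one of the minima is `a` and the other is at least `-1`, or the sum is `v + a ≥ a - 1`.
-/

/-- The virtual dimension of `L(d, m, n, 4)`: plane curves of degree `d` with a point of
multiplicity `m` and `n` general points of multiplicity `4`, each imposing `10` conditions. -/
def virtualDim (d m n : ℤ) : ℤ := d * (d + 3) / 2 - m * (m + 1) / 2 - 10 * n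

theorem virtualDim_sub_one_deg (d m n : ℤ) :
    virtualDim (d - 1) m n = virtualDim d m n - (d + 1) := by
  have h : (d - 1) * (d - 1 + 3) = d * (d + 3) - 2 * (d + 1) := by ring
  simp only [virtualDim]
  omega

theorem virtualDim_add_one_mult (d m n : ℤ) :
    virtualDim d (m + 1) n = virtualDim d m n - (m + 1) := by
  have h : (m + 1) * (m + 1 + 1) = m * (m + 1) + 2 * (m + 1) := by ring
  simp only [virtualDim]
  omega

theorem virtualDim_add_virtualDim (d e m n b : ℤ) :
    virtualDim e m n + virtualDim d e b = virtualDim d m (n + b) + e := by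
  have h : e * (e + 3) = e * (e + 1) + 2 * e := by ring
  simp only [virtualDim]
  omega

theorem sub_max_neg_one_sub_eq_min (x a : ℤ) : x - max (-1) (x - (a + 1)) - 1 = min x a := by
  omega

theorem sub_one_le_min_add_min {x y a : ℤ} (ha : -1 ≤ a) (hx : -1 ≤ x) (hy : -1 ≤ y)
    (hxy : a - 1 ≤ x + y) : a - 1 ≤ min x a + min y a := by
  omega

/-- Arithmetic core of the lemma on systems of non-negative virtual dimension:
with all virtual dimensions as in a `(k, b)` degeneration of `L(d, m0, n, 4)`, if
`v ≥ -1`, `v_P ≥ -1` and `v_F ≥ -1`, then `r_P + r_F ≥ d - k - 1`. -/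
theorem rP_add_rF_ge (d m0 n k b : ℤ) (hk : k < d)
    (hv : -1 ≤ d * (d + 3) / 2 - m0 * (m0 + 1) / 2 - 10 * n)
    (hvP : -1 ≤ (d - k) * (d - k + 3) / 2 - m0 * (m0 + 1) / 2 - 10 * (n - b))
    (hvF : -1 ≤ d * (d + 3) / 2 - (d - k) * (d - k + 1) / 2 - 10 * b) :
    (((d - k) * (d - k + 3) / 2 - m0 * (m0 + 1) / 2 - 10 * (n - b)) -
        max (-1) ((d - k - 1) * (d - k + 2) / 2 - m0 * (m0 + 1) / 2 - 10 * (n - b)) - 1) +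
      ((d * (d + 3) / 2 - (d - k) * (d - k + 1) / 2 - 10 * b) -
        max (-1) (d * (d + 3) / 2 - (d - k + 1) * (d - k + 2) / 2 - 10 * b) - 1) ≥
    d - k - 1 := by
  -- the kernel systems are written with simplified factors; restore the `virtualDim` shape
  rw [show (d - k - 1) * (d - k + 2) = (d - k - 1) * (d - k - 1 + 3) by ring,
    show (d - k + 1) * (d - k + 2) = (d - k + 1) * (d - k + 1 + 1) by ring]
  show virtualDim (d - k) m0 (n - b) - max (-1) (virtualDim (d - k - 1) m0 (n - b)) - 1 +
      (virtualDim d (d - k) b - max (-1) (virtualDim d (d - k + 1) b) - 1) ≥ d - k - 1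
  have hsum : virtualDim (d - k) m0 (n - b) + virtualDim d (d - k) b
      = virtualDim d m0 n + (d - k) := by
    rw [virtualDim_add_virtualDim, sub_add_cancel]
  rw [virtualDim_sub_one_deg, virtualDim_add_one_mult, sub_max_neg_one_sub_eq_min,
    sub_max_neg_one_sub_eq_min]
  have hv' : -1 ≤ virtualDim d m0 n := hv
  exact sub_one_le_min_add_min (by omega) hvP hvF (by omega)
end

section
/- For any eight nonzero vectors p0, p1, …, p7 ∈ ℂ³, there exists a nonzero homogeneous polynomial F ∈ ℂ[x, y, z] of degree 12 such that every partial derivative of F of total order at most 5 vanishes at p0 and every partial derivative of total order at most 3 (including F itself) vanishes at each of p1, …, p7. Consequently the system L(12, 6, 7, 4), whose virtual dimension is 12·15/2 − 6·7/2 − 7·10 = −1, is nonempty for points in general position, hence special. -/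
open MvPolynomial

/-- The differential operator `∂x^a ∂y^b ∂z^c` on `ℂ[x,y,z]`. -/
noncomputable def derivOp (a b c : ℕ) :
    MvPolynomial (Fin 3) ℂ →ₗ[ℂ] MvPolynomial (Fin 3) ℂ :=
  ((pderiv (0 : Fin 3)).toLinearMap ^ a * (pderiv (1 : Fin 3)).toLinearMap ^ b *
    (pderiv (2 : Fin 3)).toLinearMap ^ c : Module.End ℂ (MvPolynomial (Fin 3) ℂ))

/-! ### Basic facts about degrees, Euler's identity, and partial derivatives -/

lemma deg3 (d : Fin 3 →₀ ℕ) : d.degree = d 0 + d 1 + d 2 := by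
  rw [Finsupp.degree_apply]
  rw [Finset.sum_subset (Finset.subset_univ _) (fun i _ hi => by
    simpa using Finsupp.notMem_support_iff.mp hi)]
  simp [Fin.sum_univ_three]

/-- Euler's identity for homogeneous polynomials in three variables. -/
lemma euler3 {n : ℕ} {f : MvPolynomial (Fin 3) ℂ} (hf : f.IsHomogeneous n) :
    ∑ i : Fin 3, X i * pderiv i f = (n : ℂ) • f := by
  conv_lhs => rw [f.as_sum]
  conv_rhs => rw [f.as_sum]
  rw [Finset.smul_sum]
  simp only [map_sum, Finset.mul_sum]
  rw [Finset.sum_comm]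
  refine Finset.sum_congr rfl fun d hd => ?_
  have hdeg : d 0 + d 1 + d 2 = n := by
    rw [← deg3, Finsupp.degree_eq_weight_one]
    exact hf (MvPolynomial.mem_support_iff.mp hd)
  have key : ∀ i : Fin 3, X i * pderiv i (monomial d (coeff d f))
      = monomial d ((d i : ℂ) * coeff d f) := by
    intro i
    rw [pderiv_monomial]
    rcases Nat.eq_zero_or_pos (d i) with h | h
    · simp [h]
    · rw [X, monomial_mul, add_tsub_cancel_of_le (by rwa [Finsupp.single_le_iff])]
      ring_nf
  rw [Finset.sum_congr rfl fun i _ => key i]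
  rw [Fin.sum_univ_three]
  rw [← map_add, ← map_add, smul_monomial]
  congr 1
  rw [smul_eq_mul]
  push_cast [← hdeg]
  ring

lemma pderiv_isHomogeneous {n : ℕ} {f : MvPolynomial (Fin 3) ℂ} (i : Fin 3)
    (hf : f.IsHomogeneous n) : (pderiv i f).IsHomogeneous (n - 1) := by
  conv => rw [f.as_sum]
  rw [map_sum]
  apply MvPolynomial.IsHomogeneous.sum
  intro d hd
  have hdeg : d.degree = n := by
    rw [Finsupp.degree_eq_weight_one]
    exact hf (MvPolynomial.mem_support_iff.mp hd)
  rw [pderiv_monomial]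
  rcases Nat.eq_zero_or_pos (d i) with h | h
  · simp [h]; exact isHomogeneous_zero _ _ _
  · apply isHomogeneous_monomial
    have hle : Finsupp.single i 1 ≤ d := by rwa [Finsupp.single_le_iff]
    rw [deg3] at hdeg ⊢
    simp only [Finsupp.tsub_apply]
    fin_cases i <;> simp [Finsupp.single_apply] at * <;> omega

lemma pderiv_comm3 (i j : Fin 3) (f : MvPolynomial (Fin 3) ℂ) :
    pderiv i (pderiv j f) = pderiv j (pderiv i f) := by
  induction f using MvPolynomial.induction_on' with
  | monomial d r =>
    rcases eq_or_ne i j with rfl | hij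
    · rfl
    · simp only [pderiv_monomial]
      rw [Finsupp.tsub_apply, Finsupp.tsub_apply,
        Finsupp.single_apply, Finsupp.single_apply]
      rw [if_neg (fun h => hij h.symm), if_neg (fun h => hij h)]
      congr 1
      · rw [tsub_tsub, tsub_tsub, add_comm]
      · simp; ring
  | add p q hp hq => simp [hp, hq]

/-- If all first partials of a homogeneous polynomial of positive degree vanish at a point,
then the polynomial itself vanishes there (Euler's identity). -/
lemma eval_zero_of_pderiv {n : ℕ} (hn : n ≠ 0) {f : MvPolynomial (Fin 3) ℂ}
    (hf : f.IsHomogeneous n) (q : Fin 3 → ℂ)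
    (h : ∀ i : Fin 3, eval q (pderiv i f) = 0) : eval q f = 0 := by
  have h1 := congrArg (eval q) (euler3 hf)
  rw [map_sum] at h1
  simp only [eval_mul, h, mul_zero, Finset.sum_const_zero, smul_eq_C_mul, eval_mul, eval_C] at h1
  rcases mul_eq_zero.mp h1.symm with h2 | h2
  · exact absurd (Nat.cast_injective (h2.trans Nat.cast_zero.symm)) hn
  · exact h2

/-! ### Manipulation of `derivOp` -/

lemma pcommute (i j : Fin 3) :
    Commute ((pderiv (i : Fin 3)).toLinearMap : Module.End ℂ (MvPolynomial (Fin 3) ℂ))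
      (pderiv j).toLinearMap :=
  LinearMap.ext fun f => pderiv_comm3 i j f

lemma derivOp_zero (f : MvPolynomial (Fin 3) ℂ) : derivOp 0 0 0 f = f := by
  simp [derivOp]

lemma derivOp_succ_a (a b c : ℕ) (f : MvPolynomial (Fin 3) ℂ) :
    derivOp (a + 1) b c f = derivOp a b c (pderiv 0 f) := by
  set Dx := ((pderiv (0:Fin 3)).toLinearMap : Module.End ℂ (MvPolynomial (Fin 3) ℂ))
  set Dy := ((pderiv (1:Fin 3)).toLinearMap : Module.End ℂ (MvPolynomial (Fin 3) ℂ))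
  set Dz := ((pderiv (2:Fin 3)).toLinearMap : Module.End ℂ (MvPolynomial (Fin 3) ℂ))
  have h : (derivOp (a+1) b c : Module.End ℂ (MvPolynomial (Fin 3) ℂ))
      = derivOp a b c * Dx := by
    unfold derivOp
    have h1 : Dx * Dy ^ b = Dy ^ b * Dx := ((pcommute 0 1).pow_right b).eq
    have h2 : Dx * Dz ^ c = Dz ^ c * Dx := ((pcommute 0 2).pow_right c).eq
    rw [pow_succ, mul_assoc (Dx^a) Dx (Dy^b), h1, ← mul_assoc,
      mul_assoc (Dx^a*Dy^b) Dx (Dz^c), h2, ← mul_assoc]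
  rw [h]; rfl

lemma derivOp_succ_b (a b c : ℕ) (f : MvPolynomial (Fin 3) ℂ) :
    derivOp a (b + 1) c f = derivOp a b c (pderiv 1 f) := by
  set Dx := ((pderiv (0:Fin 3)).toLinearMap : Module.End ℂ (MvPolynomial (Fin 3) ℂ))
  set Dy := ((pderiv (1:Fin 3)).toLinearMap : Module.End ℂ (MvPolynomial (Fin 3) ℂ))
  set Dz := ((pderiv (2:Fin 3)).toLinearMap : Module.End ℂ (MvPolynomial (Fin 3) ℂ))
  have h : (derivOp a (b+1) c : Module.End ℂ (MvPolynomial (Fin 3) ℂ))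
      = derivOp a b c * Dy := by
    unfold derivOp
    have h2 : Dy * Dz ^ c = Dz ^ c * Dy := ((pcommute 1 2).pow_right c).eq
    rw [pow_succ, ← mul_assoc (Dx^a) (Dy^b) Dy,
      mul_assoc (Dx^a*Dy^b) Dy (Dz^c), h2, ← mul_assoc]
  rw [h]; rfl

lemma derivOp_succ_c (a b c : ℕ) (f : MvPolynomial (Fin 3) ℂ) :
    derivOp a b (c + 1) f = derivOp a b c (pderiv 2 f) := by
  have h : (derivOp a b (c+1) : Module.End ℂ (MvPolynomial (Fin 3) ℂ))
      = derivOp a b c * (pderiv (2:Fin 3)).toLinearMap := by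
    unfold derivOp
    rw [pow_succ, ← mul_assoc]
  rw [h]; rfl

lemma d100 (f : MvPolynomial (Fin 3) ℂ) : derivOp 1 0 0 f = pderiv 0 f :=
  (derivOp_succ_a 0 0 0 f).trans (derivOp_zero _)
lemma d010 (f : MvPolynomial (Fin 3) ℂ) : derivOp 0 1 0 f = pderiv 1 f :=
  (derivOp_succ_b 0 0 0 f).trans (derivOp_zero _)
lemma d001 (f : MvPolynomial (Fin 3) ℂ) : derivOp 0 0 1 f = pderiv 2 f :=
  (derivOp_succ_c 0 0 0 f).trans (derivOp_zero _)
lemma d200 (f : MvPolynomial (Fin 3) ℂ) : derivOp 2 0 0 f = pderiv 0 (pderiv 0 f) :=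
  (derivOp_succ_a 1 0 0 f).trans (d100 _)
lemma d110 (f : MvPolynomial (Fin 3) ℂ) : derivOp 1 1 0 f = pderiv 1 (pderiv 0 f) :=
  (derivOp_succ_a 0 1 0 f).trans (d010 _)
lemma d101 (f : MvPolynomial (Fin 3) ℂ) : derivOp 1 0 1 f = pderiv 2 (pderiv 0 f) :=
  (derivOp_succ_a 0 0 1 f).trans (d001 _)
lemma d020 (f : MvPolynomial (Fin 3) ℂ) : derivOp 0 2 0 f = pderiv 1 (pderiv 1 f) :=
  (derivOp_succ_b 0 1 0 f).trans (d010 _)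
lemma d011 (f : MvPolynomial (Fin 3) ℂ) : derivOp 0 1 1 f = pderiv 2 (pderiv 1 f) :=
  (derivOp_succ_b 0 0 1 f).trans (d001 _)
lemma d002 (f : MvPolynomial (Fin 3) ℂ) : derivOp 0 0 2 f = pderiv 2 (pderiv 2 f) :=
  (derivOp_succ_c 0 0 1 f).trans (d001 _)

/-! ### Vanishing to a given order -/

/-- `f` vanishes to order at least `m` at `q`. -/
def Van (q : Fin 3 → ℂ) (m : ℕ) (f : MvPolynomial (Fin 3) ℂ) : Prop :=
  ∀ a b c : ℕ, a + b + c < m → eval q (derivOp a b c f) = 0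

lemma Van.mono {q : Fin 3 → ℂ} {m m' : ℕ} {f : MvPolynomial (Fin 3) ℂ}
    (h : m' ≤ m) (hf : Van q m f) : Van q m' f :=
  fun a b c habc => hf a b c (habc.trans_le h)

lemma Van.pderiv0 {q : Fin 3 → ℂ} {m : ℕ} {f : MvPolynomial (Fin 3) ℂ}
    (hf : Van q m f) : Van q (m - 1) (pderiv 0 f) :=
  fun a b c habc => by rw [← derivOp_succ_a]; exact hf _ _ _ (by omega)
lemma Van.pderiv1 {q : Fin 3 → ℂ} {m : ℕ} {f : MvPolynomial (Fin 3) ℂ}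
    (hf : Van q m f) : Van q (m - 1) (pderiv 1 f) :=
  fun a b c habc => by rw [← derivOp_succ_b]; exact hf _ _ _ (by omega)
lemma Van.pderiv2 {q : Fin 3 → ℂ} {m : ℕ} {f : MvPolynomial (Fin 3) ℂ}
    (hf : Van q m f) : Van q (m - 1) (pderiv 2 f) :=
  fun a b c habc => by rw [← derivOp_succ_c]; exact hf _ _ _ (by omega)

lemma van_mul_aux (q : Fin 3 → ℂ) :
    ∀ n m k (f g : MvPolynomial (Fin 3) ℂ), m + k = n → Van q m f → Van q k g →
      Van q n (f * g) := by
  intro n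
  induction n using Nat.strong_induction_on with
  | _ n IH =>
    intro m k f g hmk hf hg a b c habc
    have step : ∀ (u v : MvPolynomial (Fin 3) ℂ) (m' k' : ℕ), Van q m' u → Van q k' v →
        n - 1 ≤ m' + k' → ∀ a' b' c', a' + b' + c' < n - 1 →
        eval q (derivOp a' b' c' (u * v)) = 0 := by
      intro u v m' k' hu hv hsum a' b' c' h'
      have hn1 : n - 1 < n := by omega
      have : Van q (n - 1) (u * v) := by
        rcases le_total m' (n-1) with hm' | hm'
        · exact IH (n-1) hn1 m' ((n-1) - m') u v (by omega) hu (hv.mono (by omega))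
        · exact IH (n-1) hn1 (n-1) 0 u v (by omega) (hu.mono (by omega)) (hv.mono (by omega))
      exact this a' b' c' h'
    rcases a with _ | a
    · rcases b with _ | b
      · rcases c with _ | c
        · rw [derivOp_zero, eval_mul]
          rcases Nat.eq_zero_or_pos m with hm | hm
          · have := hg 0 0 0 (by omega)
            rw [derivOp_zero] at this; rw [this, mul_zero]
          · have := hf 0 0 0 (by omega)
            rw [derivOp_zero] at this; rw [this, zero_mul]
        · rw [derivOp_succ_c, pderiv_mul, map_add, map_add]
          rw [step _ _ (m-1) k hf.pderiv2 hg (by omega) 0 0 c (by omega),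
            step _ _ m (k-1) hf hg.pderiv2 (by omega) 0 0 c (by omega), add_zero]
      · rw [derivOp_succ_b, pderiv_mul, map_add, map_add]
        rw [step _ _ (m-1) k hf.pderiv1 hg (by omega) 0 b c (by omega),
          step _ _ m (k-1) hf hg.pderiv1 (by omega) 0 b c (by omega), add_zero]
    · rw [derivOp_succ_a, pderiv_mul, map_add, map_add]
      rw [step _ _ (m-1) k hf.pderiv0 hg (by omega) a b c (by omega),
        step _ _ m (k-1) hf hg.pderiv0 (by omega) a b c (by omega), add_zero]

lemma Van.mul {q : Fin 3 → ℂ} {m k : ℕ} {f g : MvPolynomial (Fin 3) ℂ}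
    (hf : Van q m f) (hg : Van q k g) : Van q (m + k) (f * g) :=
  van_mul_aux q (m + k) m k f g rfl hf hg

lemma van3_of (q : Fin 3 → ℂ) (f : MvPolynomial (Fin 3) ℂ)
    (h2 : ∀ i j : Fin 3, eval q (pderiv i (pderiv j f)) = 0)
    (h1 : ∀ j : Fin 3, eval q (pderiv j f) = 0) (h0 : eval q f = 0) : Van q 3 f := by
  intro a b c h
  match a, b, c, h with
  | 0,0,0,_ => rw [derivOp_zero]; exact h0
  | 1,0,0,_ => rw [d100]; exact h1 0
  | 0,1,0,_ => rw [d010]; exact h1 1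
  | 0,0,1,_ => rw [d001]; exact h1 2
  | 2,0,0,_ => rw [d200]; exact h2 0 0
  | 1,1,0,_ => rw [d110]; exact h2 1 0
  | 1,0,1,_ => rw [d101]; exact h2 2 0
  | 0,2,0,_ => rw [d020]; exact h2 1 1
  | 0,1,1,_ => rw [d011]; exact h2 2 1
  | 0,0,2,_ => rw [d002]; exact h2 2 2
  | a+3,b,c,h => exact absurd h (by omega)
  | 2,b+1,c,h => exact absurd h (by omega)
  | 2,0,c+1,h => exact absurd h (by omega)
  | 1,b+2,c,h => exact absurd h (by omega)
  | 1,1,c+1,h => exact absurd h (by omega)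
  | 1,0,c+2,h => exact absurd h (by omega)
  | 0,b+3,c,h => exact absurd h (by omega)
  | 0,2,c+1,h => exact absurd h (by omega)
  | 0,1,c+2,h => exact absurd h (by omega)
  | 0,0,c+3,h => exact absurd h (by omega)

lemma van2_of (q : Fin 3 → ℂ) (f : MvPolynomial (Fin 3) ℂ)
    (h1 : ∀ j : Fin 3, eval q (pderiv j f) = 0) (h0 : eval q f = 0) : Van q 2 f := by
  intro a b c h
  match a, b, c, h with
  | 0,0,0,_ => rw [derivOp_zero]; exact h0
  | 1,0,0,_ => rw [d100]; exact h1 0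
  | 0,1,0,_ => rw [d010]; exact h1 1
  | 0,0,1,_ => rw [d001]; exact h1 2
  | a+2,b,c,h => exact absurd h (by omega)
  | 1,b+1,c,h => exact absurd h (by omega)
  | 1,0,c+1,h => exact absurd h (by omega)
  | 0,b+2,c,h => exact absurd h (by omega)
  | 0,1,c+1,h => exact absurd h (by omega)
  | 0,0,c+2,h => exact absurd h (by omega)


/-! ### The space of sextics through the prescribed points -/

abbrev Idx : Type := {x : Fin 7 × Fin 7 // (x.1 : ℕ) + (x.2 : ℕ) ≤ 6}

noncomputable def expo (x : Idx) : Fin 3 →₀ ℕ :=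
  Finsupp.single 0 (x.1.1 : ℕ) + Finsupp.single 1 (x.1.2 : ℕ) +
    Finsupp.single 2 (6 - (x.1.1 : ℕ) - (x.1.2 : ℕ))

lemma expo_apply0 (x : Idx) : expo x 0 = x.1.1 := by simp [expo, Finsupp.single_apply]
lemma expo_apply1 (x : Idx) : expo x 1 = x.1.2 := by simp [expo, Finsupp.single_apply]
lemma expo_apply2 (x : Idx) : expo x 2 = 6 - (x.1.1 : ℕ) - x.1.2 := by
  simp [expo, Finsupp.single_apply]

lemma expo_inj : Function.Injective expo := by
  intro x y h
  have h0 : (x.1.1 : ℕ) = y.1.1 := by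
    rw [← expo_apply0 x, ← expo_apply0 y, h]
  have h1 : (x.1.2 : ℕ) = y.1.2 := by
    rw [← expo_apply1 x, ← expo_apply1 y, h]
  exact Subtype.ext (Prod.ext (Fin.val_injective h0) (Fin.val_injective h1))

noncomputable def Psi : (Idx → ℂ) →ₗ[ℂ] MvPolynomial (Fin 3) ℂ where
  toFun c := ∑ x : Idx, monomial (expo x) (c x)
  map_add' u v := by simp [map_add, Finset.sum_add_distrib]
  map_smul' r u := by simp [smul_monomial, Finset.smul_sum]

lemma coeff_Psi (c : Idx → ℂ) (x : Idx) : coeff (expo x) (Psi c) = c x := by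
  classical
  simp only [Psi, LinearMap.coe_mk, AddHom.coe_mk, coeff_sum, coeff_monomial]
  rw [Finset.sum_eq_single x]
  · simp
  · intro y _ hyx
    rw [if_neg (fun h => hyx (expo_inj h))]
  · intro hx; exact absurd (Finset.mem_univ x) hx

lemma Psi_homog (c : Idx → ℂ) : (Psi c).IsHomogeneous 6 := by
  show (∑ x : Idx, monomial (expo x) (c x)).IsHomogeneous 6
  apply MvPolynomial.IsHomogeneous.sum
  intro x _
  apply isHomogeneous_monomial
  rw [deg3, expo_apply0, expo_apply1, expo_apply2]
  have := x.2
  omega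

noncomputable def Ep (q : Fin 3 → ℂ) : MvPolynomial (Fin 3) ℂ →ₗ[ℂ] ℂ :=
  (aeval q).toLinearMap

lemma Ep_apply (q : Fin 3 → ℂ) (f : MvPolynomial (Fin 3) ℂ) : Ep q f = eval q f :=
  DFunLike.congr_fun (coe_aeval_eq_eval (f := q)) f

def prs : Fin 6 → Fin 3 × Fin 3 := ![(0,0),(0,1),(0,2),(1,1),(1,2),(2,2)]

noncomputable def Tmap (p0 : Fin 3 → ℂ) (p : Fin 7 → Fin 3 → ℂ) :
    (Idx → ℂ) →ₗ[ℂ] (Fin 6 → ℂ) × (Fin 7 → Fin 3 → ℂ) :=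
  LinearMap.prod
    (LinearMap.pi fun j => Ep p0 ∘ₗ (pderiv (prs j).1).toLinearMap ∘ₗ
      (pderiv (prs j).2).toLinearMap ∘ₗ Psi)
    (LinearMap.pi fun i => LinearMap.pi fun j => Ep (p i) ∘ₗ (pderiv j).toLinearMap ∘ₗ Psi)

lemma exists_ker (p0 : Fin 3 → ℂ) (p : Fin 7 → Fin 3 → ℂ) :
    ∃ c : Idx → ℂ, c ≠ 0 ∧ Tmap p0 p c = 0 := by
  have hcard : Fintype.card Idx = 28 := by decide
  have h1 : Module.finrank ℂ (Idx → ℂ) = 28 := by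
    rw [Module.finrank_fintype_fun_eq_card, hcard]
  have h2 : Module.finrank ℂ ((Fin 6 → ℂ) × (Fin 7 → Fin 3 → ℂ)) = 27 := by
    simp [Module.finrank_prod, Module.finrank_pi_fintype, Module.finrank_fintype_fun_eq_card]
  have hni : ¬ Function.Injective (Tmap p0 p) := by
    intro h
    have := LinearMap.finrank_le_finrank_of_injective h
    omega
  rw [← LinearMap.ker_eq_bot] at hni
  obtain ⟨c, hc, hc0⟩ := (Submodule.ne_bot_iff _).mp hni
  exact ⟨c, hc0, hc⟩

/-- The system `L(12, 6, 7, 4)` is nonempty: for any eight (nonzero) points there is a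
nonzero homogeneous polynomial of degree 12 with multiplicity at least 6 at the first
point and at least 4 at the remaining seven. -/
theorem L_12_6_7_4_nonempty (p0 : Fin 3 → ℂ) (p : Fin 7 → Fin 3 → ℂ)
    (hp0 : p0 ≠ 0) (hp : ∀ i, p i ≠ 0) :
    ∃ F : MvPolynomial (Fin 3) ℂ, F ≠ 0 ∧ F.IsHomogeneous 12 ∧
      (∀ a b c : ℕ, a + b + c ≤ 5 → eval p0 (derivOp a b c F) = 0) ∧
      (∀ i, ∀ a b c : ℕ, a + b + c ≤ 3 → eval (p i) (derivOp a b c F) = 0) := by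
  obtain ⟨c, hcne, hker⟩ := exists_ker p0 p
  set Q : MvPolynomial (Fin 3) ℂ := Psi c with hQ
  have hQ6 : Q.IsHomogeneous 6 := Psi_homog c
  have hQne : Q ≠ 0 := by
    intro h
    apply hcne
    funext x
    have := coeff_Psi c x
    rw [← hQ, h, coeff_zero] at this
    exact this.symm
  -- conditions at p0
  have hA : ∀ j : Fin 6, eval p0 (pderiv (prs j).1 (pderiv (prs j).2 Q)) = 0 := by
    intro j
    have := congrFun (congrArg Prod.fst hker) j
    simpa [Tmap, Ep_apply] using this
  have h2full : ∀ i j : Fin 3, eval p0 (pderiv i (pderiv j Q)) = 0 := by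
    intro i j
    fin_cases i <;> fin_cases j
    · simpa [prs] using hA 0
    · simpa [prs] using hA 1
    · simpa [prs] using hA 2
    · rw [pderiv_comm3]; simpa [prs] using hA 1
    · simpa [prs] using hA 3
    · simpa [prs] using hA 4
    · rw [pderiv_comm3]; simpa [prs] using hA 2
    · rw [pderiv_comm3]; simpa [prs] using hA 4
    · simpa [prs] using hA 5
  have h1p0 : ∀ j : Fin 3, eval p0 (pderiv j Q) = 0 := fun j =>
    eval_zero_of_pderiv (n := 5) (by norm_num) (pderiv_isHomogeneous j hQ6) p0
      (fun i => h2full i j)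
  have h0p0 : eval p0 Q = 0 :=
    eval_zero_of_pderiv (n := 6) (by norm_num) hQ6 p0 h1p0
  have hV3 : Van p0 3 Q := van3_of p0 Q h2full h1p0 h0p0
  -- conditions at p i
  have h1pi : ∀ i : Fin 7, ∀ j : Fin 3, eval (p i) (pderiv j Q) = 0 := by
    intro i j
    have := congrFun (congrFun (congrArg Prod.snd hker) i) j
    simpa [Tmap, Ep_apply] using this
  have h0pi : ∀ i : Fin 7, eval (p i) Q = 0 := fun i =>
    eval_zero_of_pderiv (n := 6) (by norm_num) hQ6 (p i) (h1pi i)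
  have hV2 : ∀ i : Fin 7, Van (p i) 2 Q := fun i => van2_of (p i) Q (h1pi i) (h0pi i)
  refine ⟨Q * Q, mul_ne_zero hQne hQne, ?_, ?_, ?_⟩
  · exact hQ6.mul hQ6
  · intro a b c h
    exact (hV3.mul hV3) a b c (by omega)
  · intro i a b c h
    exact ((hV2 i).mul (hV2 i)) a b c (by omega)
end
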